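/- arXiv:1506.08022 — 2 statements merged into one kernel-verified Lean document; each statement's English description precedes it below -/
import Mathlib

section
/- Consider the multiple regression model Y = BX + ε, where X is an ℝᵖ-valued centered square-integrable random vector with invertible covariance V₁ = 𝔼(XXᵀ), B is a q×p real matrix, ε is an ℝ^q-valued centered random vector independent of X, and set V₁₂ = 𝔼(XYᵀ). Let I₁ = {j ∈ {1,…,p} : column b_{•j} of B is nonzero}, and for K ⊆ {1,…,p} define ξ_K = ‖V₁₂ − V₁ Π_K V₁₂‖ with Π_K = A_K*(A_K V₁ A_K*)⁻¹ A_K. Then ξ_K = 0 if and only if I₁ ⊆ K. -/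
open Matrix MeasureTheory ProbabilityTheory

attribute [local instance] Matrix.frobeniusNormedAddCommGroup

/-- The coordinate-restriction map `A_K : ℝᵖ → ℝ^{|K|}` as a matrix. -/
noncomputable def AK (p : ℕ) (K : Finset (Fin p)) : Matrix {i // i ∈ K} (Fin p) ℝ :=
  fun k j => if (k : Fin p) = j then 1 else 0

/-- `Π_K := A_K* (A_K V A_K*)⁻¹ A_K`. -/
noncomputable def PiK (p : ℕ) (K : Finset (Fin p)) (V : Matrix (Fin p) (Fin p) ℝ) :
    Matrix (Fin p) (Fin p) ℝ :=
  (AK p K)ᵀ * (AK p K * V * (AK p K)ᵀ)⁻¹ * (AK p K)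

/-! In the model, `V₁₂ = V₁ Bᵀ`: the cross term `𝔼[X εᵀ]` vanishes by independence and centering
of `ε`. The matrix `V₁` is a Gram matrix in `L²`, hence positive semidefinite, and being invertible
it is positive definite; so is its principal submatrix `A_K V₁ A_Kᵀ`, which makes `Π_K V₁` a
projection onto the matrices whose rows outside `K` vanish. Cancelling `V₁`, `ξ_K = 0` says that
`Π_K V₁` fixes `Bᵀ`, i.e. that every column of `B` outside `K` is zero. -/

section Moments

variable {Ω ι κ : Type*} [MeasurableSpace Ω]

noncomputable def secondMoment (μ : Measure Ω) (X : Ω → ι → ℝ) : Matrix ι ι ℝ :=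
  fun i j => ∫ ω, X ω i * X ω j ∂μ

noncomputable def crossMoment (μ : Measure Ω) (X : Ω → ι → ℝ) (Y : Ω → κ → ℝ) : Matrix ι κ ℝ :=
  fun i j => ∫ ω, X ω i * Y ω j ∂μ

variable {μ : Measure Ω}

lemma secondMoment_eq_gram {X : Ω → ι → ℝ} (hX : ∀ i, MemLp (fun ω => X ω i) 2 μ) :
    secondMoment μ X = gram ℝ (fun i => (hX i).toLp) := by
  ext i j
  rw [gram_apply, L2.inner_def]
  refine integral_congr_ae ?_
  filter_upwards [(hX i).coeFn_toLp, (hX j).coeFn_toLp] with ω hi hj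
  simp [hi, hj, mul_comm]

lemma posSemidef_secondMoment [Finite ι] {X : Ω → ι → ℝ} (hX : ∀ i, MemLp (fun ω => X ω i) 2 μ) :
    (secondMoment μ X).PosSemidef :=
  secondMoment_eq_gram hX ▸ posSemidef_gram ℝ _

lemma crossMoment_eq_secondMoment_mul_transpose [Fintype ι] {X : Ω → ι → ℝ} {Y ε : Ω → κ → ℝ}
    {B : Matrix κ ι ℝ} (hmodel : ∀ ω, Y ω = B *ᵥ X ω + ε ω)
    (hX : ∀ i, MemLp (fun ω => X ω i) 2 μ) (hε : ∀ j, MemLp (fun ω => ε ω j) 2 μ)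
    (hεcent : ∀ j, ∫ ω, ε ω j ∂μ = 0) (hindep : IndepFun X ε μ) :
    crossMoment μ X Y = secondMoment μ X * Bᵀ := by
  ext i j
  have hXε : ∫ ω, X ω i * ε ω j ∂μ = 0 := by
    have hindep_ij := hindep.comp (measurable_pi_apply i) (measurable_pi_apply j)
    simpa [hεcent j] using hindep_ij.integral_fun_mul_eq_mul_integral
      (hX i).aestronglyMeasurable (hε j).aestronglyMeasurable
  have hXX : ∀ k, Integrable (fun ω => B j k * (X ω i * X ω k)) μ := fun k =>
    ((hX i).integrable_mul (hX k)).const_mul _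
  calc ∫ ω, X ω i * Y ω j ∂μ = ∫ ω, (∑ k, B j k * (X ω i * X ω k)) + X ω i * ε ω j ∂μ := by
        congr with ω
        simp only [hmodel, Pi.add_apply, mulVec, dotProduct, mul_add, Finset.mul_sum]
        ring_nf
    _ = ∑ k, B j k * ∫ ω, X ω i * X ω k ∂μ := by
        have hXεint : Integrable (fun ω => X ω i * ε ω j) μ := (hX i).integrable_mul (hε j)
        rw [integral_add (integrable_finsetSum _ fun k _ => hXX k) hXεint, hXε, add_zero,
          integral_finsetSum _ fun k _ => hXX k]
        simp_rw [integral_const_mul]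
    _ = _ := by simp [secondMoment, mul_apply, mul_comm]

end Moments

section Restriction

variable {p : ℕ} {K : Finset (Fin p)} {n : Type*}

lemma AK_mul (M : Matrix (Fin p) n ℝ) : AK p K * M = M.submatrix (↑) id := by
  ext k i
  simp [AK, mul_apply]

lemma mul_AK_transpose (M : Matrix n (Fin p) ℝ) : M * (AK p K)ᵀ = M.submatrix id (↑) := by
  ext i k
  simp [AK, mul_apply]

lemma AK_transpose_mul_apply (N : Matrix K n ℝ) (j : Fin p) (i : n) :
    ((AK p K)ᵀ * N) j i = if h : j ∈ K then N ⟨j, h⟩ i else 0 := by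
  split_ifs with h
  · rw [mul_apply, Finset.sum_eq_single ⟨j, h⟩] <;> simp +contextual [AK, Subtype.ext_iff]
  · refine Finset.sum_eq_zero fun k _ => ?_
    have hkj : (k : Fin p) ≠ j := fun hk => h (hk ▸ k.2)
    simp [AK, hkj]

lemma AK_transpose_mul_AK_mul_of_forall_notMem {M : Matrix (Fin p) n ℝ} (hM : ∀ j ∉ K, M j = 0) :
    (AK p K)ᵀ * (AK p K * M) = M := by
  ext j i
  rw [AK_transpose_mul_apply]
  split_ifs with h
  · simp [AK_mul]
  · simp [hM j h]

lemma PiK_mul_mul_AK_transpose {V : Matrix (Fin p) (Fin p) ℝ} (hV : V.PosDef) :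
    PiK p K V * V * (AK p K)ᵀ = (AK p K)ᵀ := by
  have hS : IsUnit (AK p K * V * (AK p K)ᵀ).det := by
    rw [AK_mul, mul_AK_transpose, submatrix_submatrix, ← isUnit_iff_isUnit_det]
    exact (hV.submatrix Subtype.val_injective).isUnit
  calc PiK p K V * V * (AK p K)ᵀ
      = (AK p K)ᵀ * ((AK p K * V * (AK p K)ᵀ)⁻¹ * (AK p K * V * (AK p K)ᵀ)) := by
        simp only [PiK, Matrix.mul_assoc]
    _ = (AK p K)ᵀ := by rw [nonsing_inv_mul _ hS, Matrix.mul_one]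

lemma PiK_mul_apply_of_notMem (V : Matrix (Fin p) (Fin p) ℝ) (M : Matrix (Fin p) n ℝ)
    {j : Fin p} (hj : j ∉ K) (i : n) : (PiK p K V * M) j i = 0 := by
  rw [PiK, Matrix.mul_assoc, Matrix.mul_assoc, AK_transpose_mul_apply, dif_neg hj]

lemma PiK_mul_mul_eq_self_iff {V : Matrix (Fin p) (Fin p) ℝ} (hV : V.PosDef)
    {M : Matrix (Fin p) n ℝ} : PiK p K V * V * M = M ↔ ∀ j ∉ K, M j = 0 := by
  refine ⟨fun h j hj => funext fun i => ?_, fun hM => ?_⟩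
  · rw [← h, Matrix.mul_assoc]
    exact PiK_mul_apply_of_notMem V _ hj i
  · calc PiK p K V * V * M = PiK p K V * V * ((AK p K)ᵀ * (AK p K * M)) := by
          rw [AK_transpose_mul_AK_mul_of_forall_notMem hM]
      _ = (AK p K)ᵀ * (AK p K * M) := by
          rw [← Matrix.mul_assoc, PiK_mul_mul_AK_transpose hV]
      _ = M := AK_transpose_mul_AK_mul_of_forall_notMem hM

lemma mul_PiK_mul_mul_eq_self_iff {V : Matrix (Fin p) (Fin p) ℝ} (hV : V.PosDef)
    {M : Matrix (Fin p) n ℝ} : V * PiK p K V * (V * M) = V * M ↔ ∀ j ∉ K, M j = 0 := by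
  have hVdet : IsUnit V.det := (isUnit_iff_isUnit_det V).mp hV.isUnit
  rw [← PiK_mul_mul_eq_self_iff hV]
  constructor
  · intro h
    simpa only [Matrix.mul_assoc, nonsing_inv_mul_cancel_left _ _ hVdet] using congrArg (V⁻¹ * ·) h
  · intro h
    rw [Matrix.mul_assoc, ← Matrix.mul_assoc (PiK p K V), h]

end Restriction

theorem stmt3_general {p q : ℕ} {Ω : Type*} [MeasurableSpace Ω] (μ : Measure Ω)
    (X : Ω → Fin p → ℝ) (Y : Ω → Fin q → ℝ) (ε : Ω → Fin q → ℝ)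
    (B : Matrix (Fin q) (Fin p) ℝ)
    -- the multiple regression model `Y = BX + ε`
    (hmodel : ∀ ω, Y ω = B.mulVec (X ω) + ε ω)
    -- square integrability
    (hXL2 : ∀ i, MemLp (fun ω => X ω i) 2 μ)
    (hεL2 : ∀ j, MemLp (fun ω => ε ω j) 2 μ)
    -- `X` and `ε` are centered
    (hεcent : ∀ j, ∫ ω, ε ω j ∂μ = 0)
    -- `ε` is independent of `X`
    (hindep : IndepFun X ε μ)
    -- covariance operators
    (V₁ : Matrix (Fin p) (Fin p) ℝ) (hV₁ : V₁ = fun i j => ∫ ω, X ω i * X ω j ∂μ)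
    (hV₁inv : IsUnit V₁)
    (V₁₂ : Matrix (Fin p) (Fin q) ℝ) (hV₁₂ : V₁₂ = fun i j => ∫ ω, X ω i * Y ω j ∂μ)
    (K : Finset (Fin p)) :
    ‖V₁₂ - V₁ * PiK p K V₁ * V₁₂‖ = 0 ↔
      {j : Fin p | (fun i => B i j) ≠ 0} ⊆ ↑K := by
  replace hV₁ : V₁ = secondMoment μ X := hV₁
  have hV₁pd : V₁.PosDef := (hV₁ ▸ posSemidef_secondMoment hXL2).posDef_iff_isUnit.mpr hV₁inv
  have hV₁₂B : V₁₂ = V₁ * Bᵀ := by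
    rw [hV₁₂, hV₁]
    exact crossMoment_eq_secondMoment_mul_transpose hmodel hXL2 hεL2 hεcent hindep
  rw [norm_eq_zero, sub_eq_zero, hV₁₂B, eq_comm, mul_PiK_mul_mul_eq_self_iff hV₁pd]
  exact forall_congr' fun j => not_imp_comm

theorem stmt3 {p q : ℕ} {Ω : Type*} [MeasurableSpace Ω] (μ : Measure Ω)
    [IsProbabilityMeasure μ]
    (X : Ω → Fin p → ℝ) (Y : Ω → Fin q → ℝ) (ε : Ω → Fin q → ℝ)
    (B : Matrix (Fin q) (Fin p) ℝ)
    -- the multiple regression model `Y = BX + ε`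
    (hmodel : ∀ ω, Y ω = B.mulVec (X ω) + ε ω)
    (hXmeas : Measurable X) (hεmeas : Measurable ε)
    -- square integrability
    (hXL2 : ∀ i, MemLp (fun ω => X ω i) 2 μ)
    (hεL2 : ∀ j, MemLp (fun ω => ε ω j) 2 μ)
    -- `X` and `ε` are centered
    (hXcent : ∀ i, ∫ ω, X ω i ∂μ = 0)
    (hεcent : ∀ j, ∫ ω, ε ω j ∂μ = 0)
    -- `ε` is independent of `X`
    (hindep : IndepFun X ε μ)
    -- covariance operators
    (V₁ : Matrix (Fin p) (Fin p) ℝ) (hV₁ : V₁ = fun i j => ∫ ω, X ω i * X ω j ∂μ)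
    (hV₁inv : IsUnit V₁)
    (V₁₂ : Matrix (Fin p) (Fin q) ℝ) (hV₁₂ : V₁₂ = fun i j => ∫ ω, X ω i * Y ω j ∂μ)
    (K : Finset (Fin p)) (hK : K.Nonempty) :
    ‖V₁₂ - V₁ * PiK p K V₁ * V₁₂‖ = 0 ↔
      {j : Fin p | (fun i => B i j) ≠ 0} ⊆ ↑K :=
  stmt3_general μ X Y ε B hmodel hXL2 hεL2 hεcent hindep V₁ hV₁ hV₁inv V₁₂ hV₁₂ K
end

section
/- Let L₁ : ℝᵖ → H be linear with V₁ = L₁*L₁ invertible, L₂ : ℝ^q → H linear, V₁₂ = L₁*L₂, and K ⊆ {1,…,p} nonempty. Then V₁₂ − V₁ Π_K V₁₂ = L₁* Q L₂, where Q is the orthogonal projection of H onto the orthogonal complement of range(L₁ A_K*) and Π_K = A_K*(A_K V₁ A_K*)⁻¹ A_K. Consequently ξ_K := ‖V₁₂ − V₁ Π_K V₁₂‖ = ‖L₁* Q L₂‖. -/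
/-! With `M = L₁ A_K*`, the Gram operator `M* M = A_K V₁ A_K*` is invertible because `L₁`
(as `V₁` is) and `A_K*` (as `A_K` is onto) are injective. Hence the orthogonal projection onto
`range M` is `M (M* M)⁻¹ M*`, so `Q = 1 - M (M* M)⁻¹ M*`, and expanding `L₁* Q L₂` gives
`V₁₂ - V₁ Π_K V₁₂` term by term. -/

open ContinuousLinearMap Matrix

/-- The coordinate-restriction map `A_K : ℝᵖ → ℝ^{|K|}` as a continuous linear map
between Euclidean spaces. -/
noncomputable def AKc (p : ℕ) (K : Finset (Fin p)) :
    EuclideanSpace ℝ (Fin p) →L[ℝ] EuclideanSpace ℝ {i // i ∈ K} :=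
  LinearMap.toContinuousLinearMap
    { toFun := fun x => WithLp.toLp 2 (fun k => x k.1)
      map_add' := fun _ _ => rfl
      map_smul' := fun _ _ => rfl }

section

variable {𝕜 E F : Type*} [RCLike 𝕜]
  [NormedAddCommGroup E] [InnerProductSpace 𝕜 E] [CompleteSpace E]
  [NormedAddCommGroup F] [InnerProductSpace 𝕜 F] [CompleteSpace F]

theorem ContinuousLinearMap.adjoint_injective_of_surjective {T : E →L[𝕜] F}
    (hT : Function.Surjective T) : Function.Injective T.adjoint := by
  rw [← coe_coe, ← LinearMap.ker_eq_bot, ← orthogonal_range, LinearMap.range_eq_top.2 hT,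
    Submodule.top_orthogonal_eq_bot]

theorem ContinuousLinearMap.isUnit_adjoint_comp_self [FiniteDimensional 𝕜 E] {T : E →L[𝕜] F}
    (hT : Function.Injective T) : IsUnit (T.adjoint ∘L T) := by
  rw [isUnit_iff_isUnit_toLinearMap, LinearMap.isUnit_iff_ker_eq_bot, ker_adjoint_comp_self,
    LinearMap.ker_eq_bot]
  exact hT

theorem ContinuousLinearMap.starProjection_range {T : E →L[𝕜] F}
    [(LinearMap.range (T : E →ₗ[𝕜] F)).HasOrthogonalProjection]
    (hT : IsUnit (T.adjoint ∘L T)) :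
    (LinearMap.range (T : E →ₗ[𝕜] F)).starProjection =
      T ∘L Ring.inverse (T.adjoint ∘L T) ∘L T.adjoint := by
  ext v
  refine Submodule.eq_starProjection_of_mem_orthogonal ⟨_, rfl⟩ ?_
  rw [orthogonal_range, LinearMap.mem_ker, coe_coe, map_sub, sub_eq_zero]
  change T.adjoint v = ((T.adjoint ∘L T) * Ring.inverse (T.adjoint ∘L T)) (T.adjoint v)
  rw [Ring.mul_inverse_cancel _ hT]
  rfl

end

theorem AKc_surjective (p : ℕ) (K : Finset (Fin p)) : Function.Surjective (AKc p K) := by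
  intro y
  refine ⟨WithLp.toLp 2 fun i => if h : i ∈ K then y ⟨i, h⟩ else 0, ?_⟩
  ext k
  change (if h : (k : Fin p) ∈ K then y ⟨k, h⟩ else 0) = y k
  simp [k.2]

theorem stmt15_general {p q : ℕ} {H : Type*} [NormedAddCommGroup H] [InnerProductSpace ℝ H]
    [CompleteSpace H]
    (L₁ : EuclideanSpace ℝ (Fin p) →L[ℝ] H) (L₂ : EuclideanSpace ℝ (Fin q) →L[ℝ] H)
    (V₁ : EuclideanSpace ℝ (Fin p) →L[ℝ] EuclideanSpace ℝ (Fin p))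
    (hV₁ : V₁ = L₁.adjoint ∘L L₁) (hV₁inv : Function.Bijective V₁)
    (V₁₂ : EuclideanSpace ℝ (Fin q) →L[ℝ] EuclideanSpace ℝ (Fin p))
    (hV₁₂ : V₁₂ = L₁.adjoint ∘L L₂)
    (K : Finset (Fin p))
    -- `Π_K := A_K* (A_K V₁ A_K*)⁻¹ A_K`
    (PiK : EuclideanSpace ℝ (Fin p) →L[ℝ] EuclideanSpace ℝ (Fin p))
    (hPiK : PiK = (AKc p K).adjoint ∘L
      Ring.inverse (AKc p K ∘L V₁ ∘L (AKc p K).adjoint) ∘L AKc p K)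
    -- `Q` : the orthogonal projection of `H` onto `range(L₁ A_K*)ᗮ`
    (Q : H →L[ℝ] H)
    (hQ : Q = (LinearMap.range (L₁ ∘L (AKc p K).adjoint : EuclideanSpace ℝ {i // i ∈ K} →ₗ[ℝ] H))ᗮ.subtypeL ∘L
      Submodule.orthogonalProjectionOnto (LinearMap.range (L₁ ∘L (AKc p K).adjoint : EuclideanSpace ℝ {i // i ∈ K} →ₗ[ℝ] H))ᗮ) :
    V₁₂ - V₁ ∘L PiK ∘L V₁₂ = L₁.adjoint ∘L Q ∘L L₂ ∧
      ‖V₁₂ - V₁ ∘L PiK ∘L V₁₂‖ = ‖L₁.adjoint ∘L Q ∘L L₂‖ := by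
  set A := AKc p K
  set M := L₁ ∘L A.adjoint
  have hL₁ : Function.Injective L₁ :=
    (adjoint_comp_self_injective_iff L₁).1 (by rw [← coe_comp, ← hV₁]; exact hV₁inv.1)
  have hGram : IsUnit (M.adjoint ∘L M) :=
    isUnit_adjoint_comp_self (hL₁.comp (adjoint_injective_of_surjective (AKc_surjective p K)))
  have hQ' : Q = 1 - M ∘L Ring.inverse (M.adjoint ∘L M) ∘L M.adjoint := by
    rw [hQ, ← starProjection_range hGram]
    exact Submodule.starProjection_orthogonal' _
  have hMM : M.adjoint ∘L M = A ∘L V₁ ∘L A.adjoint := by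
    simp only [M, adjoint_comp, adjoint_adjoint, hV₁, comp_assoc]
  have key : V₁₂ - V₁ ∘L PiK ∘L V₁₂ = L₁.adjoint ∘L Q ∘L L₂ := by
    rw [hQ', hMM, hPiK, hV₁₂, hV₁]
    simp only [M, sub_comp, comp_sub, one_def, id_comp, adjoint_comp, adjoint_adjoint, comp_assoc]
  exact ⟨key, congrArg norm key⟩

theorem stmt15 {p q : ℕ} {H : Type*} [NormedAddCommGroup H] [InnerProductSpace ℝ H]
    [CompleteSpace H]
    (L₁ : EuclideanSpace ℝ (Fin p) →L[ℝ] H) (L₂ : EuclideanSpace ℝ (Fin q) →L[ℝ] H)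
    (V₁ : EuclideanSpace ℝ (Fin p) →L[ℝ] EuclideanSpace ℝ (Fin p))
    (hV₁ : V₁ = L₁.adjoint ∘L L₁) (hV₁inv : Function.Bijective V₁)
    (V₁₂ : EuclideanSpace ℝ (Fin q) →L[ℝ] EuclideanSpace ℝ (Fin p))
    (hV₁₂ : V₁₂ = L₁.adjoint ∘L L₂)
    (K : Finset (Fin p)) (hK : K.Nonempty)
    -- `Π_K := A_K* (A_K V₁ A_K*)⁻¹ A_K`
    (PiK : EuclideanSpace ℝ (Fin p) →L[ℝ] EuclideanSpace ℝ (Fin p))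
    (hPiK : PiK = (AKc p K).adjoint ∘L
      Ring.inverse (AKc p K ∘L V₁ ∘L (AKc p K).adjoint) ∘L AKc p K)
    -- `Q` : the orthogonal projection of `H` onto `range(L₁ A_K*)ᗮ`
    (Q : H →L[ℝ] H)
    (hQ : Q = (LinearMap.range (L₁ ∘L (AKc p K).adjoint : EuclideanSpace ℝ {i // i ∈ K} →ₗ[ℝ] H))ᗮ.subtypeL ∘L
      Submodule.orthogonalProjectionOnto (LinearMap.range (L₁ ∘L (AKc p K).adjoint : EuclideanSpace ℝ {i // i ∈ K} →ₗ[ℝ] H))ᗮ) :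
    V₁₂ - V₁ ∘L PiK ∘L V₁₂ = L₁.adjoint ∘L Q ∘L L₂ ∧
      ‖V₁₂ - V₁ ∘L PiK ∘L V₁₂‖ = ‖L₁.adjoint ∘L Q ∘L L₂‖ :=
  stmt15_general L₁ L₂ V₁ hV₁ hV₁inv V₁₂ hV₁₂ K PiK hPiK Q hQ
end
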